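/- Let a, b ∈ ℝ³ be distinct points and let κ ∈ ℝ, ω₀ ∈ ℝ³, v₀ ∈ ℝ³. Define v_a = κ a + ω₀ ×₃ a + v₀ and v_b = κ b + ω₀ ×₃ b + v₀. Let β = (b − a)/‖b − a‖ and P u = u − ⟨β, u⟩β. Then P(v_b − v_a)/‖b − a‖ = ω₀ ×₃ β; that is, the bearing time-derivative P(v_b − v_a)/‖b − a‖ − ω₀ ×₃ β (equivalently, the body-frame bearing derivative up to the rotation Rᵢᵀ) vanishes. -/

import Mathlib

open scoped RealInnerProductSpace

noncomputable section

abbrev E3 := EuclideanSpace ℝ (Fin 3)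

/-- The cross product on `ℝ³`. -/
def cross3 (x y : E3) : E3 :=
  (EuclideanSpace.equiv (Fin 3) ℝ).symm
    ![x 1 * y 2 - x 2 * y 1, x 2 * y 0 - x 0 * y 2, x 0 * y 1 - x 1 * y 0]

/-- The bearing `β = (b - a)/‖b - a‖`. -/
def bearing3 (a b : E3) : E3 := ‖b - a‖⁻¹ • (b - a)

/-- Orthogonal projection `P_β u = u - ⟪β, u⟫ β` onto `span{β}ᗮ`. -/
def proj3 (β u : E3) : E3 := u - ⟪β, u⟫ • β

/-! With `r = b - a`, a similarity motion gives `v_b - v_a = κ r + ω₀ × r`. The projection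
`P_β` annihilates `r` and fixes `ω₀ × r`, which is orthogonal to `r`, so what is left is
`‖r‖⁻¹ (ω₀ × r) = ω₀ × β`. -/

open Matrix

lemma cross3_eq_crossProduct (x y : E3) :
    cross3 x y = WithLp.toLp 2 (x.ofLp ⨯₃ y.ofLp) := by
  ext i
  fin_cases i <;> simp [cross3, cross_apply]

lemma cross3_smul_right (x : E3) (c : ℝ) (y : E3) :
    cross3 x (c • y) = c • cross3 x y := by
  simp [cross3_eq_crossProduct]

lemma cross3_sub_right (x y z : E3) :
    cross3 x (y - z) = cross3 x y - cross3 x z := by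
  simp [cross3_eq_crossProduct]

lemma inner_self_cross3 (x y : E3) : ⟪y, cross3 x y⟫ = 0 := by
  simp only [cross3_eq_crossProduct, EuclideanSpace.inner_eq_star_dotProduct, star_trivial]
  rw [dotProduct_comm]
  exact dot_cross_self x.ofLp y.ofLp

lemma proj3_add (β u v : E3) : proj3 β (u + v) = proj3 β u + proj3 β v := by
  simp only [proj3, inner_add_right]
  module

lemma proj3_smul (β : E3) (c : ℝ) (u : E3) : proj3 β (c • u) = c • proj3 β u := by
  simp only [proj3, inner_smul_right]
  module

lemma proj3_of_inner_eq_zero {β u : E3} (h : ⟪β, u⟫ = 0) : proj3 β u = u := by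
  simp [proj3, h]

lemma proj3_inv_norm_smul_self (r : E3) : proj3 (‖r‖⁻¹ • r) r = 0 := by
  rcases eq_or_ne r 0 with rfl | hr
  · simp [proj3]
  · have hn : ‖r‖ ≠ 0 := norm_ne_zero_iff.mpr hr
    have h_unit : ‖r‖⁻¹ * ‖r‖ ^ 2 * ‖r‖⁻¹ = 1 := by field_simp
    rw [proj3, inner_smul_left, real_inner_self_eq_norm_sq, smul_smul, conj_trivial, h_unit,
      one_smul, sub_self]

lemma sub_similarity_velocity (κ : ℝ) (ω v a b : E3) :
    (κ • b + cross3 ω b + v) - (κ • a + cross3 ω a + v) = κ • (b - a) + cross3 ω (b - a) := by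
  rw [cross3_sub_right]
  module

lemma inv_norm_smul_proj3_similarity (κ : ℝ) (ω r : E3) :
    ‖r‖⁻¹ • proj3 (‖r‖⁻¹ • r) (κ • r + cross3 ω r) = cross3 ω (‖r‖⁻¹ • r) := by
  have h_perp : ⟪‖r‖⁻¹ • r, cross3 ω r⟫ = 0 := by
    rw [inner_smul_left, inner_self_cross3, mul_zero]
  rw [proj3_add, proj3_smul, proj3_inv_norm_smul_self, proj3_of_inner_eq_zero h_perp,
    smul_zero, zero_add, cross3_smul_right]

theorem similarity_motion_in_null_bearing_rigidity_general
    (a b : E3)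
    (κ : ℝ) (ω₀ v₀ : E3)
    (va vb : E3)
    (hva : va = κ • a + cross3 ω₀ a + v₀)
    (hvb : vb = κ • b + cross3 ω₀ b + v₀) :
    ‖b - a‖⁻¹ • proj3 (bearing3 a b) (vb - va) = cross3 ω₀ (bearing3 a b) := by
  rw [hva, hvb, sub_similarity_velocity, bearing3]
  exact inv_norm_smul_proj3_similarity κ ω₀ (b - a)

/-- Infinitesimal similarity motions (scaling `κ`, rotation with angular velocity `ω₀`
applied to all robots, translation `v₀`) annihilate the bearing time-derivative:
`P(v_b − v_a)/‖b − a‖ = ω₀ × β`, i.e. `T_b ⊆ Null B_G`. -/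
theorem similarity_motion_in_null_bearing_rigidity
    (a b : E3) (hab : a ≠ b)
    (κ : ℝ) (ω₀ v₀ : E3)
    (va vb : E3)
    (hva : va = κ • a + cross3 ω₀ a + v₀)
    (hvb : vb = κ • b + cross3 ω₀ b + v₀) :
    ‖b - a‖⁻¹ • proj3 (bearing3 a b) (vb - va) = cross3 ω₀ (bearing3 a b) :=
  similarity_motion_in_null_bearing_rigidity_general a b κ ω₀ v₀ va vb hva hvb
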